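/- Let S = ({a,b,c}, φ, {a}) with φ(a) = aac, φ(b) = bc, φ(c) = bc. Then for every k ≥ 1, the word (bc)^{4k} lies in L(S²) and is not weakly synchronized in S² = ({a,b,c}, φ², {a, aac}); in particular S² is not weakly circular. (Witness: the interpretations (ε, (bc)^k, ε) and (bc, (bc)^k b, bc) of (bc)^{4k} in S² are never compatible with a common factorization.) -/
import Mathlib


/-- The morphism on words induced by a map on letters. -/
def applyM {A B : Type*} (f : A → List B) (w : List A) : List B := (w.map f).flatten

/-- `wpow u n` is the word `u` repeated `n` times. -/
def wpow {A : Type*} (u : List A) (n : ℕ) : List A := (List.replicate n u).flatten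

/-- A word is primitive if it is nonempty and not a proper power. -/
def Primitive {A : Type*} (w : List A) : Prop := w ≠ [] ∧ ∀ u n, w = wpow u n → n = 1

/-- Conjugacy of words. -/
def Conj {A : Type*} (u v : List A) : Prop := ∃ x y, u = x ++ y ∧ v = y ++ x

/-- The language of a D(F)0L system with (iterated) morphism `g` and axiom set `W`:
all factors of all `g^[n] w`, `w ∈ W`. -/
def LangG {A : Type*} (g : List A → List A) (W : Set (List A)) : Set (List A) :=
  {u | ∃ n : ℕ, ∃ w ∈ W, u <:+: g^[n] w}

/-- `(s, w, t)` is an interpretation of `u`: `w` is in the language and `g w = s ++ u ++ t`. -/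
def Interp {A : Type*} (g : List A → List A) (L : Set (List A)) (s w t u : List A) : Prop :=
  w ∈ L ∧ g w = s ++ u ++ t

/-- The pair `(u₁, u₂)` is compatible with the interpretation `(s, w, t)` of `u₁ ++ u₂`. -/
def Compatible {A : Type*} (g : List A → List A) (s w t u₁ u₂ : List A) : Prop :=
  ∃ w₁ w₂, w = w₁ ++ w₂ ∧ g w₁ = s ++ u₁ ∧ g w₂ = u₂ ++ t

/-- Weakly synchronizing pair: compatible with all interpretations of `u₁ ++ u₂`. -/
def WeakSync {A : Type*} (g : List A → List A) (L : Set (List A)) (u₁ u₂ : List A) : Prop :=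
  ∀ s w t, Interp g L s w t (u₁ ++ u₂) → Compatible g s w t u₁ u₂

/-- Strongly synchronizing pair. -/
def StrongSync {A : Type*} (g : List A → List A) (L : Set (List A)) (u₁ u₂ : List A) : Prop :=
  u₁ ≠ [] ∧ ∃ a : A, ∀ s w t, Interp g L s w t (u₁ ++ u₂) →
    ∃ w₁ w₂, w = w₁ ++ w₂ ∧ g w₁ = s ++ u₁ ∧ g w₂ = u₂ ++ t ∧ w₁.getLast? = some a

/-- A word is weakly synchronized if some factorization of it is weakly synchronizing. -/
def WeaklySynchronized {A : Type*} (g : List A → List A) (L : Set (List A)) (u : List A) : Prop :=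
  ∃ u₁ u₂, u = u₁ ++ u₂ ∧ WeakSync g L u₁ u₂

/-- An admissible pair: compatible with at least one interpretation. -/
def Admissible {A : Type*} (g : List A → List A) (L : Set (List A)) (u₁ u₂ : List A) : Prop :=
  ∃ s w t, Interp g L s w t (u₁ ++ u₂) ∧ Compatible g s w t u₁ u₂

/-- A word is bounded if the lengths of its iterated images stay bounded. -/
def BoundedWord {A : Type*} (f : A → List A) (w : List A) : Prop :=
  ∃ C, ∀ k : ℕ, ((applyM f)^[k] w).length ≤ C

/-- `Ω(S)`: primitive words all of whose powers belong to the language. -/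
def Omega {A : Type*} (f : A → List A) (W : Set (List A)) : Set (List A) :=
  {v | v ∈ LangG (applyM f) W ∧ Primitive v ∧ ∀ k : ℕ, wpow v k ∈ LangG (applyM f) W}

/-- Minimal interpretation: `|s| < |f(first letter of w)|` and `|t| < |f(last letter of w)|`. -/
def MinInterp {A : Type*} (f : A → List A) (L : Set (List A)) (s w t u : List A) : Prop :=
  Interp (applyM f) L s w t u ∧ w ≠ [] ∧
    (∀ a, w.head? = some a → s.length < (f a).length) ∧
    (∀ b, w.getLast? = some b → t.length < (f b).length)

inductive ABC3 : Type | a | b | c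
deriving DecidableEq

open ABC3 in
def φ15 : ABC3 → List ABC3
  | a => [a, a, c]
  | b => [b, c]
  | c => [b, c]

/-- The letter map of the square morphism `φ²`. -/
def φ15sq : ABC3 → List ABC3 := fun x => applyM φ15 (φ15 x)


section Aux
open ABC3

lemma applyM_append {A B : Type*} (f : A → List B) (x y : List A) :
    applyM f (x ++ y) = applyM f x ++ applyM f y := by
  simp [applyM]

lemma wpow_add {A : Type*} (u : List A) (m n : ℕ) :
    wpow u (m + n) = wpow u m ++ wpow u n := by
  rw [wpow, wpow, wpow, List.replicate_add, List.flatten_append]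

lemma wpow_one {A : Type*} (u : List A) : wpow u 1 = u := by simp [wpow]

lemma wpow_succ {A : Type*} (u : List A) (m : ℕ) :
    wpow u (m + 1) = wpow u m ++ u := by
  rw [wpow_add, wpow_one]

lemma wpow_comm {A : Type*} (u : List A) (m : ℕ) :
    wpow u m ++ u = u ++ wpow u m := by
  rw [← wpow_succ]
  have h : m + 1 = 1 + m := by omega
  rw [h, wpow_add, wpow_one]

lemma wpow_prefix {A : Type*} (u : List A) {j m : ℕ} (h : j ≤ m) :
    wpow u j <+: wpow u m :=
  ⟨wpow u (m - j), by rw [← wpow_add]; congr 1; omega⟩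

lemma g_wpow (m : ℕ) :
    applyM φ15sq (wpow [b, c] m) = wpow [b, c] (4 * m) := by
  induction m with
  | zero => simp [wpow, applyM]
  | succ n ih =>
    rw [wpow_succ, applyM_append, ih]
    have h1 : applyM φ15sq [b, c] = wpow [b, c] 4 := rfl
    have h2 : 4 * (n + 1) = 4 * n + 4 := by ring
    rw [h1, h2, wpow_add]

lemma dvd4 (w : List ABC3) : 4 ∣ (applyM φ15sq w).length := by
  induction w with
  | nil => simp [applyM]
  | cons x t ih =>
    have h : applyM φ15sq (x :: t) = φ15sq x ++ applyM φ15sq t := by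
      simp [applyM]
    rw [h, List.length_append]
    have hx : (φ15sq x).length = 8 ∨ (φ15sq x).length = 4 := by
      cases x <;> simp [φ15sq, applyM, φ15]
    omega

lemma suffix_pow (n : ℕ) :
    wpow [b, c] (4 ^ n) <:+ (applyM φ15sq)^[n + 1] [a] := by
  induction n with
  | zero =>
    show wpow [b, c] 1 <:+ (applyM φ15sq)^[1] [a]
    rw [wpow_one, Function.iterate_one]
    exact ⟨[a, a, c, a, a, c], rfl⟩
  | succ n ih =>
    obtain ⟨x, hx⟩ := ih
    rw [Function.iterate_succ_apply', ← hx, applyM_append, g_wpow]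
    have : 4 * 4 ^ n = 4 ^ (n + 1) := by ring
    rw [this]
    exact List.suffix_append _ _

lemma mem_lang {v : List ABC3} {n : ℕ} (h : v <:+: wpow [b, c] (4 ^ n)) :
    v ∈ LangG (applyM φ15sq) {[a], [a, a, c]} :=
  ⟨n + 1, [a], Or.inl rfl, h.trans (suffix_pow n).isInfix⟩

lemma four_mul_le (k : ℕ) (hk : 1 ≤ k) : 4 * k ≤ 4 ^ k := by
  induction k with
  | zero => omega
  | succ n ih =>
    rcases Nat.eq_or_lt_of_le hk with h | h
    · simp [← h]
    · have h1 := ih (by omega)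
      have h2 : 4 ^ n ≥ 4 := by
        calc 4 = 4 ^ 1 := by norm_num
        _ ≤ 4 ^ n := Nat.pow_le_pow_right (by norm_num) (by omega)
      have : 4 ^ (n + 1) = 4 * 4 ^ n := by ring
      omega

end Aux

open ABC3 in
theorem stmt15 :
    ∀ k : ℕ, 1 ≤ k →
      wpow [b, c] (4 * k) ∈ LangG (applyM φ15sq) {[a], [a, a, c]} ∧
      ¬ WeaklySynchronized (applyM φ15sq) (LangG (applyM φ15sq) {[a], [a, a, c]})
        (wpow [b, c] (4 * k)) := by
  intro k hk
  have h4k : 4 * k ≤ 4 ^ k := four_mul_le k hk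
  have hk1 : k + 1 ≤ 4 ^ k := by omega
  have hmem1 : wpow [b, c] (4 * k) ∈ LangG (applyM φ15sq) {[a], [a, a, c]} :=
    mem_lang (wpow_prefix _ h4k).isInfix
  refine ⟨hmem1, ?_⟩
  rintro ⟨u₁, u₂, hu, hsync⟩
  -- Interpretation 1: s = [], w = (bc)^k, t = []
  have hI1 : Interp (applyM φ15sq) (LangG (applyM φ15sq) {[a], [a, a, c]})
      [] (wpow [b, c] k) [] (u₁ ++ u₂) := by
    refine ⟨mem_lang (wpow_prefix _ (by omega : k ≤ 4 ^ k)).isInfix, ?_⟩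
    rw [g_wpow, ← hu]
    simp
  obtain ⟨w₁, w₂, _, hg1, _⟩ := hsync _ _ _ hI1
  have hd1 : 4 ∣ u₁.length := by
    have := dvd4 w₁
    rw [hg1] at this
    simpa using this
  -- Interpretation 2: s = [b,c], w = (bc)^k ++ [b], t = [b,c]
  have hI2 : Interp (applyM φ15sq) (LangG (applyM φ15sq) {[a], [a, a, c]})
      [b, c] (wpow [b, c] k ++ [b]) [b, c] (u₁ ++ u₂) := by
    constructor
    · refine mem_lang (List.IsInfix.trans ?_ (wpow_prefix _ hk1).isInfix)
      exact ⟨[], [c], by rw [wpow_succ]; simp⟩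
    · rw [applyM_append, g_wpow, ← hu]
      have hb : applyM φ15sq [b] = [b, c] ++ [b, c] := rfl
      rw [hb, ← List.append_assoc, wpow_comm]
  obtain ⟨w₁', w₂', _, hg1', _⟩ := hsync _ _ _ hI2
  have hd2 := dvd4 w₁'
  rw [hg1', List.length_append] at hd2
  simp only [List.length_cons, List.length_nil] at hd2
  omega
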